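/- arXiv:2103.09286 — 4 statements merged into one kernel-verified Lean document; each statement's English description precedes it below -/
import Mathlib

section
/- For every m ≥ k ≥ 1 and integers 1 ≤ a_1 < a_2 < ... < a_{k+1} ≤ n, the stair convex k-chain satisfies the non-recursive formula: stc^m_k(a_1,...,a_{k+1}) equals the sum over all (t_1,...,t_{k+1}) in N_0^{k+1} with t_1 + ... + t_{k+1} = m − k of the product stc^{t_1}_0(a_1) × ∏_{i=1}^{k} ([a_i, a_{i+1}] × stc^{t_{i+1}}_0(a_{i+1})). -/
/-- A cell of a grid complex `G[n]^m`: a list of `m` factors, each either a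
vertex `{a}` (encoded `(a, false)`) or a unit interval `[a, a+1]` (encoded `(a, true)`). -/
abbrev GCell := List (ℕ × Bool)

/-- Cellular chains with `ℤ/2` coefficients. -/
abbrev GChain := GCell →₀ ZMod 2

/-- Product of chains, induced by concatenation of cells. -/
noncomputable def prodC (α β : GChain) : GChain :=
  α.sum fun c x => β.sum fun d y => Finsupp.single (c ++ d) (x * y)

/-- The vertex `{a}` of `G[n]`, as a chain. -/
noncomputable def vtx (a : ℕ) : GChain := Finsupp.single [(a, false)] 1

/-- The unit interval `[a, a+1]` of `G[n]`, as a chain. -/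
noncomputable def seg (a : ℕ) : GChain := Finsupp.single [(a, true)] 1

/-- The 1-chain `[a,b] = [a,a+1] + ... + [b-1,b]` (symmetrized so `[b,a] = [a,b]`). -/
noncomputable def intervalC (a b : ℕ) : GChain :=
  ∑ j ∈ Finset.Ico (min a b) (max a b), seg j

/-- The diagonal vertex `(a, ..., a)` of `G[n]^m`. -/
noncomputable def diag (m a : ℕ) : GChain := Finsupp.single (List.replicate m (a, false)) 1

/-- Stair convex chains, with the list of parameters in *reverse* (decreasing) order. -/
noncomputable def stcR : ℕ → List ℕ → GChain
  | 0, [_] => Finsupp.single [] 1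
  | 0, _ => 0
  | _ + 1, [] => 0
  | m + 1, [a] => prodC (stcR m [a]) (vtx a)
  | m + 1, b :: c :: rest =>
      prodC (stcR m (c :: rest)) (intervalC c b) + prodC (stcR m (b :: c :: rest)) (vtx b)

/-- The stair convex chain `stc^m_k (a₁, ..., a_{k+1})` where the parameters are
given as the (increasing) list `l = [a₁, ..., a_{k+1}]` with `k = l.length - 1`. -/
noncomputable def stc (m : ℕ) (l : List ℕ) : GChain := stcR m l.reverse

/-- Boundary of a cell, via the product rule `∂(σ×τ) = ∂σ×τ + σ×∂τ`,
`∂{a} = 0`, `∂[a,a+1] = {a} + {a+1}`. -/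
noncomputable def bndCell : GCell → GChain
  | [] => 0
  | (a, false) :: rest => prodC (vtx a) (bndCell rest)
  | (a, true) :: rest =>
      prodC (vtx a + vtx (a + 1)) (Finsupp.single rest 1) + prodC (seg a) (bndCell rest)

/-- The boundary operator on chains, extended linearly. -/
noncomputable def bnd (α : GChain) : GChain := α.sum fun c x => x • bndCell c

/-- Ordered product of a list of chains. -/
noncomputable def bigProd (l : List GChain) : GChain := l.foldr prodC (Finsupp.single [] 1)

/-- `c` is a cell of the grid complex `G[n]^m`. -/
def isCellOf (m n : ℕ) (c : GCell) : Prop :=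
  c.length = m ∧ ∀ e ∈ c, 1 ≤ e.1 ∧ (if e.2 then e.1 + 1 else e.1) ≤ n

/-- Dimension of a cell: the number of interval factors. -/
def dimCell (c : GCell) : ℕ := (c.filter fun e => e.2).length

/-!
Unwinding the recursion `m` times, each step appends either a vertex `{a_j}` at the current last
parameter `a_j`, or the interval `[a_{j-1}, a_j]` while dropping `a_j`. So a product cell of
`stc^m_k(a₁, …, a_{k+1})` reads `t₁` copies of `{a₁}`, then `[a₁, a₂]`, then `t₂` copies of `{a₂}`,
and so on, with `t₁ + ⋯ + t_{k+1} = m - k`.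

Splitting off the last exponent `t_{k+1}` (zero or a successor) shows that the right-hand
sums obey the same recursion in `m` as the stair chains; the base cases are `k = 0` (a diagonal
vertex) and `k > m` (the zero chain). Products of chains are computed in the free monoid algebra
`ℤ/2[FreeMonoid (ℕ × Bool)]`, where `prodC` is multiplication.
-/

abbrev ChainAlgebra := MonoidAlgebra (ZMod 2) (FreeMonoid (ℕ × Bool))

noncomputable abbrev toChainAlgebra : GChain ≃+ ChainAlgebra := MonoidAlgebra.coeffAddEquiv.symm

lemma prodC_eq (α β : GChain) :
    prodC α β = toChainAlgebra.symm (toChainAlgebra α * toChainAlgebra β) := by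
  change _ = (toChainAlgebra α * toChainAlgebra β).coeff
  simp only [prodC, MonoidAlgebra.mul_def, Finsupp.sum, MonoidAlgebra.coeff_sum,
    MonoidAlgebra.coeff_single]
  rfl

lemma prodC_assoc (α β γ : GChain) : prodC (prodC α β) γ = prodC α (prodC β γ) := by
  simp only [prodC_eq, AddEquiv.apply_symm_apply, mul_assoc]

lemma toChainAlgebra_single_nil : toChainAlgebra (Finsupp.single [] 1) = 1 := rfl

lemma prodC_single_nil_right (α : GChain) : prodC α (Finsupp.single [] 1) = α := by
  rw [prodC_eq, toChainAlgebra_single_nil, mul_one, AddEquiv.symm_apply_apply]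

lemma prodC_single_nil_left (α : GChain) : prodC (Finsupp.single [] 1) α = α := by
  rw [prodC_eq, toChainAlgebra_single_nil, one_mul, AddEquiv.symm_apply_apply]

lemma prodC_zero_left (α : GChain) : prodC 0 α = 0 := by
  rw [prodC_eq, map_zero, zero_mul, map_zero]

lemma sum_prodC {ι : Type*} (s : Finset ι) (f : ι → GChain) (γ : GChain) :
    prodC (∑ i ∈ s, f i) γ = ∑ i ∈ s, prodC (f i) γ := by
  simp only [prodC_eq, map_sum, Finset.sum_mul]

lemma prodC_single_single (c d : GCell) (x y : ZMod 2) :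
    prodC (Finsupp.single c x) (Finsupp.single d y) = Finsupp.single (c ++ d) (x * y) := by
  rw [prodC_eq]
  exact congrArg toChainAlgebra.symm
    (MonoidAlgebra.single_mul_single (R := ZMod 2) (M := FreeMonoid (ℕ × Bool)) c d x y)

lemma bigProd_append_singleton (l : List GChain) (α : GChain) :
    bigProd (l ++ [α]) = prodC (bigProd l) α := by
  induction l with
  | nil => exact (prodC_single_nil_right α).trans (prodC_single_nil_left α).symm
  | cons β l ih =>
    change prodC β (bigProd (l ++ [α])) = prodC (prodC β (bigProd l)) α
    rw [ih, prodC_assoc]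

lemma diag_zero (a : ℕ) : diag 0 a = Finsupp.single [] 1 := rfl

lemma diag_succ (j a : ℕ) : diag (j + 1) a = prodC (diag j a) (vtx a) := by
  rw [diag, diag, vtx, prodC_single_single, mul_one, List.replicate_succ']

lemma stcR_singleton (m a : ℕ) : stcR m [a] = diag m a := by
  induction m with
  | zero => rfl
  | succ m ih => rw [stcR, ih, diag_succ]

lemma stcR_eq_zero_of_lt : ∀ (m : ℕ) (l : List ℕ), m + 1 < l.length → stcR m l = 0
  | 0, [], h | 0, [_], h | m + 1, [_], h | m + 1, [_, _], h => by simp at h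
  | 0, _ :: _ :: _, _ | _ + 1, [], _ => rfl
  | m + 1, b :: c :: d :: l, h => by
    simp only [List.length_cons] at h
    rw [stcR, stcR_eq_zero_of_lt m (c :: d :: l) (by simp only [List.length_cons]; omega),
      stcR_eq_zero_of_lt m (b :: c :: d :: l) (by simp only [List.length_cons]; omega),
      prodC_zero_left, prodC_zero_left, add_zero]

lemma reverse_ofFn_succ {k : ℕ} (a : Fin (k + 1) → ℕ) :
    (List.ofFn a).reverse = a (Fin.last k) :: (List.ofFn (Fin.init a)).reverse := by
  rw [List.ofFn_succ', List.concat_eq_append, List.reverse_append]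
  rfl

lemma stc_ofFn_one (m : ℕ) (a : Fin 1 → ℕ) : stc m (List.ofFn a) = diag m (a 0) := by
  rw [List.ofFn_succ, List.ofFn_zero]
  exact stcR_singleton m (a 0)

lemma stc_ofFn_eq_zero {m k : ℕ} (hmk : m < k) (a : Fin (k + 1) → ℕ) : stc m (List.ofFn a) = 0 :=
  stcR_eq_zero_of_lt m _ (by simpa using hmk)

lemma stc_succ_ofFn {k : ℕ} (m : ℕ) (a : Fin (k + 2) → ℕ) :
    stc (m + 1) (List.ofFn a) =
      prodC (stc m (List.ofFn (Fin.init a))) (intervalC (a (Fin.last k).castSucc) (a (Fin.last _))) +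
        prodC (stc m (List.ofFn a)) (vtx (a (Fin.last _))) := by
  unfold stc
  rw [reverse_ofFn_succ a, reverse_ofFn_succ (Fin.init a), stcR, ← reverse_ofFn_succ (Fin.init a),
    ← reverse_ofFn_succ a]
  rfl

open Finset in
lemma sum_antidiagonalTuple_succ_eq_sum_snoc {M : Type*} [AddCommMonoid M] (k N : ℕ)
    (f : (Fin (k + 1) → ℕ) → M) :
    ∑ t ∈ Nat.antidiagonalTuple (k + 1) N, f t =
      ∑ p ∈ antidiagonal N, ∑ s ∈ Nat.antidiagonalTuple k p.1, f (Fin.snoc s p.2) := by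
  rw [sum_sigma']
  refine sum_nbij' (fun t => ⟨(∑ i : Fin k, t i.castSucc, t (Fin.last k)), Fin.init t⟩)
    (fun q => Fin.snoc q.2 q.1.2) ?_ ?_ ?_ ?_ ?_
  · intro t ht
    rw [Nat.mem_antidiagonalTuple, Fin.sum_univ_castSucc] at ht
    simp only [mem_sigma, HasAntidiagonal.mem_antidiagonal, Nat.mem_antidiagonalTuple]
    exact ⟨ht, rfl⟩
  · rintro ⟨⟨x, y⟩, s⟩ hq
    simp only [mem_sigma, HasAntidiagonal.mem_antidiagonal,
      Nat.mem_antidiagonalTuple] at hq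
    rw [Nat.mem_antidiagonalTuple, Fin.sum_univ_castSucc]
    simp only [Fin.snoc_castSucc, Fin.snoc_last, hq.2, hq.1]
  · intro t _
    exact Fin.snoc_init_self t
  · rintro ⟨⟨x, y⟩, s⟩ hq
    simp only [mem_sigma, Nat.mem_antidiagonalTuple] at hq
    simp only [Fin.snoc_castSucc, Fin.snoc_last, Fin.init_snoc, hq.2]
  · intro t _
    rw [Fin.snoc_init_self]

noncomputable def stairTerm (k : ℕ) (a t : Fin (k + 1) → ℕ) : GChain :=
  prodC (diag (t 0) (a 0)) (bigProd (List.ofFn fun i : Fin k =>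
    prodC (intervalC (a i.castSucc) (a i.succ)) (diag (t i.succ) (a i.succ))))

noncomputable def stairSum (k : ℕ) (a : Fin (k + 1) → ℕ) (N : ℕ) : GChain :=
  ∑ t ∈ Finset.Nat.antidiagonalTuple (k + 1) N, stairTerm k a t

lemma stairSum_zero (a : Fin 1 → ℕ) (N : ℕ) : stairSum 0 a N = diag N (a 0) := by
  rw [stairSum, Finset.Nat.antidiagonalTuple_one, Finset.sum_singleton, stairTerm, List.ofFn_zero]
  exact prodC_single_nil_right _

lemma stairTerm_succ_snoc {k : ℕ} (a : Fin (k + 2) → ℕ) (s : Fin (k + 1) → ℕ) (j : ℕ) :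
    stairTerm (k + 1) a (Fin.snoc s j) =
      prodC (prodC (stairTerm k (Fin.init a) s)
        (intervalC (a (Fin.last k).castSucc) (a (Fin.last _)))) (diag j (a (Fin.last _))) := by
  have hs0 : (Fin.snoc s j : Fin (k + 2) → ℕ) 0 = s 0 := Fin.snoc_castSucc (i := 0) ..
  rw [stairTerm, List.ofFn_succ', List.concat_eq_append, bigProd_append_singleton]
  simp only [Fin.succ_castSucc, Fin.snoc_castSucc, Fin.succ_last, Fin.snoc_last, hs0,
    ← prodC_assoc]
  rfl

lemma stairSum_succ {k : ℕ} (a : Fin (k + 2) → ℕ) (N : ℕ) :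
    stairSum (k + 1) a N =
      ∑ p ∈ Finset.HasAntidiagonal.antidiagonal N,
        prodC (prodC (stairSum k (Fin.init a) p.1)
          (intervalC (a (Fin.last k).castSucc) (a (Fin.last _)))) (diag p.2 (a (Fin.last _))) := by
  rw [stairSum, sum_antidiagonalTuple_succ_eq_sum_snoc]
  refine Finset.sum_congr rfl fun p _ => ?_
  simp only [stairTerm_succ_snoc, stairSum, sum_prodC]

lemma stairSum_succ_zero {k : ℕ} (a : Fin (k + 2) → ℕ) :
    stairSum (k + 1) a 0 =
      prodC (stairSum k (Fin.init a) 0) (intervalC (a (Fin.last k).castSucc) (a (Fin.last _))) := by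
  rw [stairSum_succ, Finset.Nat.antidiagonal_zero, Finset.sum_singleton, diag_zero,
    prodC_single_nil_right]

lemma stairSum_succ_succ {k : ℕ} (a : Fin (k + 2) → ℕ) (N : ℕ) :
    stairSum (k + 1) a (N + 1) =
      prodC (stairSum k (Fin.init a) (N + 1))
          (intervalC (a (Fin.last k).castSucc) (a (Fin.last _))) +
        prodC (stairSum (k + 1) a N) (vtx (a (Fin.last _))) := by
  rw [stairSum_succ, Finset.Nat.sum_antidiagonal_succ', diag_zero, prodC_single_nil_right,
    stairSum_succ, sum_prodC]
  simp only [diag_succ, prodC_assoc]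

theorem stc_ofFn_eq_stairSum {m k : ℕ} (hkm : k ≤ m) (a : Fin (k + 1) → ℕ) :
    stc m (List.ofFn a) = stairSum k a (m - k) := by
  induction m generalizing k with
  | zero =>
    obtain rfl : k = 0 := Nat.le_zero.mp hkm
    rw [stc_ofFn_one, stairSum_zero]
  | succ m ih =>
    rcases k with _ | k
    · rw [stc_ofFn_one, stairSum_zero, Nat.sub_zero]
    rw [stc_succ_ofFn, ih (by omega)]
    rcases (Nat.lt_or_eq_of_le (Nat.le_of_succ_le_succ hkm)) with hk | rfl
    · obtain ⟨N, hN⟩ : ∃ N, m - k = N + 1 := ⟨m - (k + 1), by omega⟩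
      rw [ih hk, hN, show m + 1 - (k + 1) = N + 1 by omega, show m - (k + 1) = N by omega,
        stairSum_succ_succ]
    · rw [stc_ofFn_eq_zero (Nat.lt_succ_self k), prodC_zero_left, add_zero, Nat.sub_self,
        Nat.sub_self, stairSum_succ_zero]

theorem stmt2_general (m k : ℕ) (hkm : k ≤ m)
    (a : Fin (k + 1) → ℕ) :
    stc m (List.ofFn a) =
      ∑ t ∈ Finset.Nat.antidiagonalTuple (k + 1) (m - k),
        prodC (diag (t 0) (a 0))
          (bigProd (List.ofFn fun i : Fin k =>
            prodC (intervalC (a i.castSucc) (a i.succ)) (diag (t i.succ) (a i.succ)))) :=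
  stc_ofFn_eq_stairSum hkm a

/-- Non-recursive ("unwrapped") formula for the stair convex chain: for `m ≥ k ≥ 1` and
`1 ≤ a₁ < ... < a_{k+1} ≤ n`,
`stc^m_k(a₁,...,a_{k+1}) = Σ_{t₁+...+t_{k+1} = m-k} stc^{t₁}_0(a₁) ×
  ∏_{i=1}^{k} ([aᵢ, a_{i+1}] × stc^{t_{i+1}}_0(a_{i+1}))`. -/
theorem stmt2 (n m k : ℕ) (hk : 1 ≤ k) (hkm : k ≤ m)
    (a : Fin (k + 1) → ℕ) (ha : StrictMono a) (h1 : 1 ≤ a 0) (hn : a (Fin.last k) ≤ n) :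
    stc m (List.ofFn a) =
      ∑ t ∈ Finset.Nat.antidiagonalTuple (k + 1) (m - k),
        prodC (diag (t 0) (a 0))
          (bigProd (List.ofFn fun i : Fin k =>
            prodC (intervalC (a i.castSucc) (a i.succ)) (diag (t i.succ) (a i.succ)))) :=
  stmt2_general m k hkm a
end

section
/- If an axis-aligned hyperplane {x_j = a} in the grid complex G[n]^m contains a k-dimensional cell of the support of the stair convex chain stc^m_k(a_1,...,a_{k+1}), then a ∈ {a_1,...,a_{k+1}}. -/
/-!
A cell in the support of a product of chains is the concatenation of cells in the supports of
the factors. The recursion defining `stc` only multiplies by vertices `{aᵢ}` and by interval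
chains `[aᵢ, aᵢ₊₁]`, whose cells are edges; so every vertex factor of a cell in the support of
`stc^m_k(a₁, ..., a_{k+1})` is one of the `{aᵢ}`.
-/

lemma exists_append_of_mem_support_prodC {α β : GChain} {c : GCell}
    (h : c ∈ (prodC α β).support) : ∃ d ∈ α.support, ∃ e ∈ β.support, c = d ++ e := by
  obtain ⟨d, hd, h⟩ := Finset.mem_biUnion.mp (Finsupp.support_sum h)
  obtain ⟨e, he, h⟩ := Finset.mem_biUnion.mp (Finsupp.support_sum h)
  exact ⟨d, hd, e, he, Finset.mem_singleton.mp (Finsupp.support_single_subset h)⟩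

lemma eq_of_mem_support_vtx {a : ℕ} {c : GCell} (h : c ∈ (vtx a).support) :
    c = [(a, false)] :=
  Finset.mem_singleton.mp (Finsupp.support_single_subset h)

lemma exists_eq_of_mem_support_intervalC {a b : ℕ} {c : GCell}
    (h : c ∈ (intervalC a b).support) : ∃ i, c = [(i, true)] := by
  obtain ⟨i, -, h⟩ := Finset.mem_biUnion.mp (Finsupp.support_finsetSum h)
  exact ⟨i, Finset.mem_singleton.mp (Finsupp.support_single_subset h)⟩

lemma mem_of_vertex_mem_of_mem_support_stcR {m : ℕ} {l : List ℕ} {c : GCell}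
    (hc : c ∈ (stcR m l).support) {v : ℕ} (hv : (v, false) ∈ c) : v ∈ l := by
  induction m, l using stcR.induct generalizing c with
  | case1 a =>
    rw [stcR] at hc
    simp [Finset.mem_singleton.mp (Finsupp.support_single_subset hc)] at hv
  | case2 l hl =>
    rcases l with _ | ⟨x, _ | ⟨y, l⟩⟩ <;> simp_all [stcR]
  | case3 m => simp [stcR] at hc
  | case4 m a ih =>
    rw [stcR] at hc
    obtain ⟨d, hd, e, he, rfl⟩ := exists_append_of_mem_support_prodC hc
    rw [eq_of_mem_support_vtx he, List.mem_append, List.mem_singleton] at hv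
    rcases hv with hv | hv
    · exact ih hd hv
    · simp_all
  | case5 m b a rest ihEdge ihVertex =>
    rw [stcR] at hc
    rcases Finset.mem_union.mp (Finsupp.support_add hc) with hc | hc
    · obtain ⟨d, hd, e, he, rfl⟩ := exists_append_of_mem_support_prodC hc
      obtain ⟨i, rfl⟩ := exists_eq_of_mem_support_intervalC he
      rw [List.mem_append, List.mem_singleton] at hv
      rcases hv with hv | hv
      · exact List.mem_cons_of_mem b (ihEdge hd hv)
      · simp at hv
    · obtain ⟨d, hd, e, he, rfl⟩ := exists_append_of_mem_support_prodC hc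
      rw [eq_of_mem_support_vtx he, List.mem_append, List.mem_singleton] at hv
      rcases hv with hv | hv
      · exact ihVertex hd hv
      · simp_all

theorem stmt3_general (m k : ℕ)
    (a : Fin (k + 1) → ℕ)
    (c : GCell) (hc : c ∈ (stc m (List.ofFn a)).support)
    (j : ℕ) (hj : j < c.length) (v : ℕ) (hv : c.get ⟨j, hj⟩ = (v, false)) :
    ∃ i : Fin (k + 1), a i = v := by
  have hvc : (v, false) ∈ c := hv ▸ List.get_mem c ⟨j, hj⟩
  simpa only [List.mem_reverse, List.mem_ofFn] using
    mem_of_vertex_mem_of_mem_support_stcR hc hvc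

/-- If an axis-aligned hyperplane `x_j = v` contains a `k`-dimensional cell of the
support of `stc^m_k(a₁,...,a_{k+1})` (i.e. the `j`-th factor of the cell is the constant
vertex `{v}`), then `v ∈ {a₁, ..., a_{k+1}}`. -/
theorem stmt3 (n m k : ℕ) (hk : 1 ≤ k) (hkm : k ≤ m)
    (a : Fin (k + 1) → ℕ) (ha : StrictMono a) (h1 : 1 ≤ a 0) (hn : a (Fin.last k) ≤ n)
    (c : GCell) (hc : c ∈ (stc m (List.ofFn a)).support)
    (hdim : dimCell c = k)
    (j : ℕ) (hj : j < c.length) (v : ℕ) (hv : c.get ⟨j, hj⟩ = (v, false)) :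
    ∃ i : Fin (k + 1), a i = v :=
  stmt3_general m k a c hc j hj v hv
end

section
/- For any m, ℓ, q there exists N = N(m,ℓ,q) such that for every coloring of the grid [N]^m with q colors, there exist strictly increasing functions γ_1, ..., γ_m : [ℓ] → [N] such that all points (γ_1(x_1), ..., γ_m(x_m)) for (x_1,...,x_m) ∈ [ℓ]^m receive the same color. -/
/-!
Induction on the dimension. Colour each hyperplane `{t} × [N]^m` by the whole colouring it
induces on a smaller grid `[N₀]^m`; this is a colouring of `[N]` with finitely many colours,
so by pigeonhole `l` hyperplanes `δ 0 < ⋯ < δ (l-1)` carry the same induced colouring, and a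
monochromatic subgrid of that common colouring, given by the induction hypothesis, extends
by `δ` to a monochromatic subgrid one dimension up.
-/

def SubgridRamsey (α : Type*) (m l N : ℕ) : Prop :=
  ∀ χ : (Fin m → Fin N) → α, ∃ γ : Fin m → Fin l → Fin N, (∀ i, StrictMono (γ i)) ∧
    ∃ c, ∀ x : Fin m → Fin l, χ (fun i => γ i (x i)) = c

theorem Fintype.exists_strictMono_forall_eq_of_card_mul_lt {β : Type*} [Fintype β]
    {l N : ℕ} (hN : card β * l < N) (χ : Fin N → β) :
    ∃ δ : Fin l → Fin N, StrictMono δ ∧ ∃ b, ∀ s, χ (δ s) = b := by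
  classical
  obtain ⟨b, hb⟩ := exists_lt_card_fiber_of_mul_lt_card (n := l) χ (by simpa using hN)
  obtain ⟨t, ht, rfl⟩ := Finset.exists_subset_card_eq hb.le
  refine ⟨t.orderEmbOfFin rfl, (t.orderEmbOfFin rfl).strictMono, b, fun s => ?_⟩
  simpa using ht (t.orderEmbOfFin_mem rfl s)

theorem subgridRamsey_zero (α : Type*) (l N : ℕ) : SubgridRamsey α 0 l N :=
  fun χ => ⟨finZeroElim, finZeroElim, χ finZeroElim,
    fun _ => congrArg χ (funext finZeroElim)⟩

theorem SubgridRamsey.succ {α : Type*} [Fintype α] {m l N₀ N : ℕ}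
    (h : SubgridRamsey α m l N₀) (hN₀ : N₀ ≤ N)
    (hN : Fintype.card ((Fin m → Fin N₀) → α) * l < N) : SubgridRamsey α (m + 1) l N := by
  intro χ
  let e := Fin.castLEOrderEmb hN₀
  let slice : Fin N → (Fin m → Fin N₀) → α := fun t y => χ (Fin.cons t (e ∘ y))
  obtain ⟨δ, hδ, b, hslice⟩ := Fintype.exists_strictMono_forall_eq_of_card_mul_lt hN slice
  obtain ⟨γ, hγ, c, hb⟩ := h b
  refine ⟨Fin.cons δ fun i => e ∘ γ i, Fin.cases hδ fun i => e.strictMono.comp (hγ i), c,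
    fun x => ?_⟩
  have hpoint : (fun i => (Fin.cons δ fun i => e ∘ γ i : Fin (m + 1) → Fin l → Fin N) i (x i))
      = Fin.cons (δ (x 0)) (e ∘ fun i => γ i (x i.succ)) := by
    funext i
    cases i using Fin.cases <;> rfl
  rw [hpoint, ← hb]
  exact congrFun (hslice (x 0)) _

theorem exists_subgridRamsey (α : Type*) [Finite α] (m l : ℕ) :
    ∃ N, SubgridRamsey α m l N := by
  have := Fintype.ofFinite α
  induction m with
  | zero => exact ⟨0, subgridRamsey_zero α l 0⟩
  | succ m ih =>
    obtain ⟨N₀, h⟩ := ih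
    exact ⟨N₀ + Fintype.card ((Fin m → Fin N₀) → α) * l + 1, h.succ (by omega) (by omega)⟩

/-- Monochromatic subgrid lemma: for any `m, ℓ, q` there is an `N` such that every
`q`-coloring of the grid `[N]^m` contains a monochromatic combinatorial subgrid of
side `ℓ`, given by strictly increasing maps `γ_i : [ℓ] → [N]` in each coordinate. -/
theorem stmt7 (m l q : ℕ) :
    ∃ N : ℕ, ∀ χ : (Fin m → Fin N) → Fin q,
      ∃ γ : Fin m → (Fin l → Fin N), (∀ i, StrictMono (γ i)) ∧
        ∃ col : Fin q, ∀ x : Fin m → Fin l, χ (fun i => γ i (x i)) = col :=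
  exists_subgridRamsey (Fin q) m l
end

section
/- Subgrid lemma: for any b, k, m, ℓ ∈ N with ℓ ≥ 2, there exists N = N(b,k,m,ℓ) such that for any group homomorphism h from the group of Z_2-valued k-chains of the grid complex G[N]^m to (Z_2)^b, there exists a subgrid γ : G[ℓ]^m ↪ G[N]^m lying in the kernel of h, i.e., h(γ_#(c)) = 0 for every k-chain c of G[ℓ]^m. -/
/-- The image of a cell under a subgrid map `γ` (coordinatewise strictly increasing
relabelings): vertex factors `{a}` go to `{γᵢ(a)}` and interval factors `[a,a+1]` go
to the 1-chains `[γᵢ(a), γᵢ(a+1)]`. The first argument tracks the coordinate index. -/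
noncomputable def sgCell (γ : ℕ → ℕ → ℕ) : ℕ → GCell → GChain
  | _, [] => Finsupp.single [] 1
  | j, (a, false) :: rest => prodC (vtx (γ j a)) (sgCell γ (j + 1) rest)
  | j, (a, true) :: rest => prodC (intervalC (γ j a) (γ j (a + 1))) (sgCell γ (j + 1) rest)

/-- The chain map `γ_#` induced by a subgrid. -/
noncomputable def sgMap (γ : ℕ → ℕ → ℕ) (α : GChain) : GChain :=
  α.sum fun c x => x • sgCell γ 0 c

open Set Function

lemma prodC_add_left (α β γ : GChain) : prodC (α + β) γ = prodC α γ + prodC β γ := by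
  unfold prodC
  rw [Finsupp.sum_add_index' (fun _ => by simp)]
  intro c x₁ x₂
  rw [← Finsupp.sum_add]
  exact Finsupp.sum_congr fun d _ => by rw [add_mul, Finsupp.single_add]

lemma prodC_add_right (α β γ : GChain) : prodC α (β + γ) = prodC α β + prodC α γ := by
  unfold prodC
  rw [← Finsupp.sum_add]
  refine Finsupp.sum_congr fun c _ => ?_
  rw [Finsupp.sum_add_index' (fun _ => by simp)]
  intro d y₁ y₂
  rw [mul_add, Finsupp.single_add]

noncomputable def prodCLeft (α : GChain) : GChain →+ GChain :=
  AddMonoidHom.mk' (prodC α) (prodC_add_right α)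

lemma gChain_add_self (α : GChain) : α + α = 0 := by
  ext c
  exact CharTwo.add_self_eq_zero (α c)

lemma intervalC_eq_add (a b : ℕ) : intervalC a b = intervalC 0 a + intervalC 0 b := by
  wlog hab : a ≤ b generalizing a b
  · rw [add_comm, ← this b a (by omega), intervalC, intervalC, min_comm, max_comm]
  simp only [intervalC, min_eq_left hab, max_eq_right hab, Nat.zero_min, Nat.zero_max,
    ← Finset.sum_Ico_consecutive seg (Nat.zero_le a) hab, ← add_assoc, gChain_add_self, zero_add]

lemma exists_strictMonoOn_mapsTo_of_le_card {ℓ : ℕ} (G : Finset ℕ) (h : ℓ ≤ G.card) :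
    ∃ φ : ℕ → ℕ, StrictMonoOn φ (Icc 1 ℓ) ∧ MapsTo φ (Icc 1 ℓ) G := by
  have hG : (Set.ofPred (· ∈ G)).Finite := G.finite_toSet
  have hcard : hG.toFinset.card = G.card := by simp
  refine ⟨fun a => Nat.nth (· ∈ G) (a - 1), fun a ha b hb hab => ?_, fun a ha => ?_⟩
  · exact Nat.nth_strictMonoOn hG (by simp only [mem_Iio]; grind) (by simp only [mem_Iio]; grind)
      (by grind)
  · exact Nat.nth_mem_of_lt_card hG (by grind)

theorem exists_monochromatic_subgrid (K : Type*) [Finite K] (ℓ m : ℕ) :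
    ∃ N : ℕ, ∀ C : (ℕ → ℕ) → K, ∃ γ : ℕ → ℕ → ℕ,
      (∀ i < m, StrictMonoOn (γ i) (Icc 1 ℓ)) ∧ (∀ i < m, MapsTo (γ i) (Icc 1 ℓ) (Icc 1 N)) ∧
      ∃ k₀, ∀ t : ℕ → ℕ, (∀ i < m, t i ∈ Icc 1 ℓ) → C (fun i => γ i (t i)) = k₀ := by
  induction m generalizing K with
  | zero => exact ⟨0, fun C => ⟨fun _ _ => 0, by simp, by simp, _, fun _ _ => rfl⟩⟩
  | succ m ih =>
    have := Fintype.ofFinite K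
    classical
    set T := Fintype.card K * (ℓ - 1) + 1
    obtain ⟨N, hN⟩ := ih (Fin T → K)
    refine ⟨max N T, fun C => ?_⟩
    obtain ⟨γ, hmono, hmaps, column, hcolumn⟩ := hN fun x s => C (update x m (s + 1))
    obtain ⟨k₀, hk₀⟩ := Fintype.exists_lt_card_fiber_of_mul_lt_card column (n := ℓ - 1)
      (by simp [T])
    set G : Finset ℕ := Finset.map ⟨fun s : Fin T => s + 1, fun _ _ h => Fin.ext (by simpa using h)⟩
      {s | column s = k₀}
    obtain ⟨φ, hφmono, hφmaps⟩ := exists_strictMonoOn_mapsTo_of_le_card G (ℓ := ℓ)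
      (by rw [Finset.card_map]; omega)
    have hφ : ∀ a ∈ Icc 1 ℓ, ∃ s : Fin T, column s = k₀ ∧ s + 1 = φ a := by
      intro a ha
      obtain ⟨s, hs, hsa⟩ := Finset.mem_map.mp (hφmaps ha)
      exact ⟨s, by simpa using hs, hsa⟩
    refine ⟨update γ m φ, fun i hi => ?_, fun i hi => ?_, k₀, fun t ht => ?_⟩
    · rcases Nat.lt_succ_iff_lt_or_eq.mp hi with hi | rfl
      · simpa [hi.ne] using hmono i hi
      · simpa using hφmono
    · rcases Nat.lt_succ_iff_lt_or_eq.mp hi with hi | rfl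
      · simpa [hi.ne] using (hmaps i hi).mono_right (Icc_subset_Icc_right (le_max_left N T))
      · intro a ha
        obtain ⟨s, -, hs⟩ := hφ a ha
        simp only [update_self, mem_Icc]
        omega
    · obtain ⟨s, hs, hsφ⟩ := hφ (t m) (ht m m.lt_succ_self)
      have hpoint : (fun i => update γ m φ i (t i)) = update (fun i => γ i (t i)) m (s + 1) := by
        funext i
        rcases eq_or_ne i m with rfl | hi <;> simp_all
      rw [hpoint, ← hs]
      exact congr_fun (hcolumn t fun i hi => ht i (Nat.lt_succ_of_lt hi)) s

noncomputable def boxChain (x : ℕ → ℕ) : ℕ → List Bool → GChain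
  | _, [] => Finsupp.single [] 1
  | j, p :: ps => prodC (if p then intervalC 0 (x j) else vtx (x j)) (boxChain x (j + 1) ps)

lemma boxChain_update_of_lt (x : ℕ → ℕ) {i j : ℕ} (y : ℕ) (ps : List Bool) (hij : i < j) :
    boxChain (update x i y) j ps = boxChain x j ps := by
  induction ps generalizing j with
  | nil => rfl
  | cons p ps ih => simp [boxChain, update_of_ne hij.ne', ih (Nat.lt_succ_of_lt hij)]

theorem map_sgCell_eq_two_pow_smul {V : Type*} [AddCommMonoid V] (γ : ℕ → ℕ → ℕ) (σ : GCell)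
    (j : ℕ) (g : GChain →+ V) (v : V)
    (hv : ∀ t : ℕ → ℕ, (∀ i (hi : i < σ.length), t (j + i) ∈ Icc σ[i].1 (σ[i].1 + σ[i].2.toNat)) →
      g (boxChain (fun i => γ i (t i)) j (σ.map Prod.snd)) = v) :
    g (sgCell γ j σ) = 2 ^ dimCell σ • v := by
  induction σ generalizing j g with
  | nil => simpa [sgCell, dimCell, boxChain] using hv 0 (by simp)
  | cons e σ ih =>
    obtain ⟨a, p⟩ := e
    have hstep : ∀ c ∈ Icc a (a + p.toNat),
        g (prodC (if p then intervalC 0 (γ j c) else vtx (γ j c)) (sgCell γ (j + 1) σ)) =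
          2 ^ dimCell σ • v := by
      intro c hc
      refine ih (j + 1) (g.comp (prodCLeft _)) fun t ht => ?_
      have hpoint : (fun i => γ i (update t j c i)) = update (fun i => γ i (t i)) j (γ j c) :=
        funext fun i => apply_update γ t j c i
      rw [← hv (update t j c) ?_]
      · simp [boxChain, prodCLeft, hpoint, boxChain_update_of_lt _ _ _ j.lt_succ_self]
      · rintro (_ | i) hi
        · simpa using hc
        · rw [show j + (i + 1) = j + 1 + i by omega, update_of_ne (by omega)]
          simpa using ht i (by simpa using hi)
    cases p
    · simpa [sgCell, dimCell] using hstep a (by simp)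
    · have hdim : dimCell ((a, true) :: σ) = dimCell σ + 1 := by simp [dimCell]
      rw [sgCell, intervalC_eq_add, prodC_add_left, map_add, hdim, pow_succ, mul_two, add_nsmul]
      exact congr_arg₂ (· + ·) (by simpa using hstep a (by simp))
        (by simpa using hstep (a + 1) (by simp))

lemma two_pow_smul_eq_zero {V : Type*} [AddCommMonoid V] [Module (ZMod 2) V] {k : ℕ}
    (hk : k ≠ 0) (v : V) : 2 ^ k • v = 0 := by
  rw [← Nat.cast_smul_eq_nsmul (ZMod 2), Nat.cast_pow, Nat.cast_ofNat,
    show (2 : ZMod 2) = 0 from rfl, zero_pow hk, zero_smul]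

lemma isCellOf.mem_Icc {m l : ℕ} {σ : GCell} (hσ : isCellOf m l σ) {i n : ℕ}
    (hi : i < σ.length) (hn : n ∈ Icc σ[i].1 (σ[i].1 + σ[i].2.toNat)) : n ∈ Icc 1 l := by
  have hσi := hσ.2 σ[i] (List.getElem_mem hi)
  generalize σ[i] = e at hσi hn
  obtain ⟨a, _ | _⟩ := e <;> simp at hσi hn ⊢ <;> omega

theorem stmt10_general (b k m l : ℕ) (hk : 1 ≤ k) :
    ∃ N : ℕ, ∀ h : GChain →ₗ[ZMod 2] (Fin b → ZMod 2),
      ∃ γ : ℕ → ℕ → ℕ,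
        (∀ i < m, StrictMonoOn (γ i) (Set.Icc 1 l)) ∧
        (∀ i < m, ∀ a, 1 ≤ a → a ≤ l → 1 ≤ γ i a ∧ γ i a ≤ N) ∧
        (∀ c : GChain, (∀ e ∈ c.support, isCellOf m l e ∧ dimCell e = k) →
          h (sgMap γ c) = 0) := by
  obtain ⟨N, hN⟩ := exists_monochromatic_subgrid (List.Vector Bool m → Fin b → ZMod 2) l m
  refine ⟨N, fun h => ?_⟩
  obtain ⟨γ, hmono, hmaps, colour, hcolour⟩ := hN fun x ps => h (boxChain x 0 ps.toList)
  refine ⟨γ, hmono, fun i hi a ha₁ ha₂ => hmaps i hi ⟨ha₁, ha₂⟩, fun c hc => ?_⟩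
  have hcell : ∀ σ ∈ c.support, h (sgCell γ 0 σ) = 0 := by
    intro σ hσ
    obtain ⟨hσcell, hdim⟩ := hc σ hσ
    let pattern : List.Vector Bool m := ⟨σ.map Prod.snd, by simp [hσcell.1]⟩
    have hσh : h (sgCell γ 0 σ) = 2 ^ k • colour pattern := by
      refine hdim ▸ map_sgCell_eq_two_pow_smul γ σ 0 h.toAddMonoidHom _ fun t ht => ?_
      have hrange : ∀ i < m, t i ∈ Icc 1 l := fun i hi =>
        hσcell.mem_Icc (hσcell.1 ▸ hi) (by simpa using ht i (hσcell.1 ▸ hi))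
      rw [← hcolour t hrange]
      rfl
    rw [hσh, two_pow_smul_eq_zero (by omega)]
  rw [sgMap, map_finsuppSum]
  exact Finset.sum_eq_zero fun σ hσ => by dsimp only; rw [map_smul, hcell σ hσ, smul_zero]

/-- Subgrid lemma: for any `b, k, m, ℓ` with `ℓ ≥ 2` there is `N` such that for every
ℤ/2-linear map `h` from chains of `G[N]^m` to `(ℤ/2)^b`, there is a subgrid
`γ : G[ℓ]^m ↪ G[N]^m` with `h(γ_#(c)) = 0` for every `k`-chain `c` of `G[ℓ]^m`. -/
theorem stmt10 (b k m l : ℕ) (hb : 1 ≤ b) (hk : 1 ≤ k) (hm : 1 ≤ m) (hl : 2 ≤ l) :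
    ∃ N : ℕ, ∀ h : GChain →ₗ[ZMod 2] (Fin b → ZMod 2),
      ∃ γ : ℕ → ℕ → ℕ,
        (∀ i < m, StrictMonoOn (γ i) (Set.Icc 1 l)) ∧
        (∀ i < m, ∀ a, 1 ≤ a → a ≤ l → 1 ≤ γ i a ∧ γ i a ≤ N) ∧
        (∀ c : GChain, (∀ e ∈ c.support, isCellOf m l e ∧ dimCell e = k) →
          h (sgMap γ c) = 0) :=
  stmt10_general b k m l hk
end
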